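/- In any sequence of points (x_1, ..., x_τ) with τ ≥ d := dim_E(F, β), there exists some index j ≤ τ such that x_j is β-dependent with respect to F on at least τ/d − 1 disjoint subsequences of (x_1, ..., x_{j−1}). -/

import Mathlib

/-!
Scan the sequence from left to right, distributing its indices greedily among
`K = ⌊(τ - 1) / d⌋` disjoint buckets: each new element goes into some bucket on which
it is `β`-independent. If this ever fails, the current element is `β`-dependent on all
`K` buckets, and `K ≥ τ / d - 1`. Otherwise every bucket, read in order, is an eluder
sequence and so has at most `d` elements, which leaves room for only `K d < τ` indices.
-/

def EpsDependent {α : Type*} (F : Set (α → ℝ)) (ε : ℝ) (Z : List α) (x : α) : Prop :=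
  ∀ f ∈ F, ∀ f' ∈ F,
    Real.sqrt ((Z.map fun z => (f z - f' z) ^ 2).sum) ≤ ε → |f x - f' x| ≤ ε

def EluderSeq {α : Type*} (F : Set (α → ℝ)) (β : ℝ) (L : List α) : Prop :=
  ∃ ε' ≥ β, ∀ i : Fin L.length, ¬ EpsDependent F ε' (L.take i.1) (L.get i)

def EpsDependentIdx {α : Type*} (F : Set (α → ℝ)) (β : ℝ) (L : List α)
    (S : Finset (Fin L.length)) (x : α) : Prop :=
  ∀ f ∈ F, ∀ f' ∈ F,
    Real.sqrt (∑ i ∈ S, (f (L.get i) - f' (L.get i)) ^ 2) ≤ β → |f x - f' x| ≤ β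

open Finset Function

section GreedyPartition

variable {n : ℕ} (dep : Finset (Fin n) → Fin n → Prop)

def IsIndepSeq (S : Finset (Fin n)) : Prop :=
  ∀ k ∈ S, ¬ dep (S.filter (· < k)) k

lemma isIndepSeq_empty : IsIndepSeq dep ∅ := by
  simp [IsIndepSeq]

lemma isIndepSeq_insert {S : Finset (Fin n)} {j : Fin n} (hS : IsIndepSeq dep S)
    (hlt : ∀ k ∈ S, k < j) (hj : ¬ dep S j) : IsIndepSeq dep (insert j S) := by
  intro k hk
  rcases mem_insert.1 hk with rfl | hkS
  · rwa [filter_insert, if_neg (lt_irrefl k), filter_true_of_mem hlt]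
  · rw [filter_insert, if_neg (not_lt.2 (hlt k hkS).le)]
    exact hS k hkS

structure IsIndepPartitionBelow {K : ℕ} (B : Fin K → Finset (Fin n)) (t : ℕ) : Prop where
  mem_iff : ∀ k, (∃ i, k ∈ B i) ↔ (k : ℕ) < t
  disjoint : Pairwise (Disjoint on B)
  indep : ∀ i, IsIndepSeq dep (B i)

variable {dep}

lemma mem_update_insert_iff {K : ℕ} {B : Fin K → Finset (Fin n)} {i₀ i : Fin K}
    {j k : Fin n} :
    k ∈ update B i₀ (insert j (B i₀)) i ↔ (i = i₀ ∧ k = j) ∨ k ∈ B i := by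
  rcases eq_or_ne i i₀ with rfl | hi
  · simp
  · simp [hi]

lemma IsIndepPartitionBelow.lt {K t : ℕ} {B : Fin K → Finset (Fin n)}
    (hB : IsIndepPartitionBelow dep B t) {i : Fin K} {k : Fin n} (hk : k ∈ B i) :
    (k : ℕ) < t :=
  (hB.mem_iff k).1 ⟨i, hk⟩

lemma IsIndepPartitionBelow.update_insert {K t : ℕ} {B : Fin K → Finset (Fin n)}
    (hB : IsIndepPartitionBelow dep B t) (ht : t < n) {i₀ : Fin K}
    (hi₀ : ¬ dep (B i₀) ⟨t, ht⟩) :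
    IsIndepPartitionBelow dep (update B i₀ (insert ⟨t, ht⟩ (B i₀))) (t + 1) := by
  have hnew : ∀ i, (⟨t, ht⟩ : Fin n) ∉ B i := fun i h => lt_irrefl t (hB.lt h)
  refine ⟨fun k => ?_, fun i i' hii' => ?_, fun i => ?_⟩
  · simp only [mem_update_insert_iff, exists_or, exists_eq_left, hB.mem_iff, Fin.ext_iff (a := k)]
    omega
  · refine disjoint_left.2 fun k hk hk' => ?_
    rw [mem_update_insert_iff] at hk hk'
    rcases hk with ⟨rfl, rfl⟩ | hk <;> rcases hk' with ⟨rfl, hk'⟩ | hk'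
    · exact hii' rfl
    · exact hnew i' hk'
    · exact hnew i (hk' ▸ hk)
    · exact disjoint_left.1 (hB.disjoint hii') hk hk'
  · rcases eq_or_ne i i₀ with rfl | hi
    · rw [update_self]
      exact isIndepSeq_insert dep (hB.indep i) (fun k hk => hB.lt hk) hi₀
    · rw [update_of_ne hi]
      exact hB.indep i

lemma isIndepPartitionBelow_zero (K : ℕ) :
    IsIndepPartitionBelow dep (fun _ : Fin K => ∅) 0 :=
  ⟨by simp, fun _ _ _ => disjoint_empty_left _, fun _ => isIndepSeq_empty dep⟩

variable (dep) in
theorem exists_dependent_or_isIndepPartitionBelow (K : ℕ) :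
    (∃ j : Fin n, ∃ B : Fin K → Finset (Fin n),
      (∀ i, ∀ k ∈ B i, k < j) ∧ Pairwise (Disjoint on B) ∧ ∀ i, dep (B i) j) ∨
    ∃ B : Fin K → Finset (Fin n), IsIndepPartitionBelow dep B n := by
  refine or_iff_not_imp_left.2 fun hstuck => ?_
  push Not at hstuck
  suffices ∀ t ≤ n, ∃ B : Fin K → Finset (Fin n), IsIndepPartitionBelow dep B t from
    this n le_rfl
  intro t
  induction t with
  | zero => exact fun _ => ⟨_, isIndepPartitionBelow_zero K⟩
  | succ t ih =>
    intro ht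
    obtain ⟨B, hB⟩ := ih (by omega)
    obtain ⟨i₀, hi₀⟩ := hstuck ⟨t, ht⟩ B (fun i k hk => hB.lt hk) hB.disjoint
    exact ⟨_, hB.update_insert ht hi₀⟩

lemma IsIndepPartitionBelow.le_mul {K d : ℕ} {B : Fin K → Finset (Fin n)}
    (hB : IsIndepPartitionBelow dep B n) (hcard : ∀ i, (B i).card ≤ d) : n ≤ K * d := by
  have hcover : (univ : Finset (Fin n)) ⊆ univ.biUnion B := fun k _ => by
    obtain ⟨i, hi⟩ := (hB.mem_iff k).2 k.2
    exact mem_biUnion.2 ⟨i, mem_univ _, hi⟩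
  calc n = (univ : Finset (Fin n)).card := (card_fin n).symm
    _ ≤ (univ.biUnion B).card := card_le_card hcover
    _ ≤ (univ : Finset (Fin K)).card * d := card_biUnion_le_card_mul _ _ _ fun i _ => hcard i
    _ = K * d := by rw [card_fin]

end GreedyPartition

lemma Finset.sum_take_ofFn_orderEmbOfFin {ι M : Type*} [LinearOrder ι] [AddCommMonoid M]
    (S : Finset ι) (g : ι → M) {i : ℕ} (hi : i < S.card) :
    ((List.ofFn (g ∘ S.orderEmbOfFin rfl)).take i).sum =
      ∑ k ∈ S.filter (· < S.orderEmbOfFin rfl ⟨i, hi⟩), g k := by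
  set e := S.orderEmbOfFin rfl
  have hpred : S.filter (· < e ⟨i, hi⟩) = (univ.filter (·.val < i)).map e.toEmbedding := by
    ext k
    simp only [mem_filter, mem_map, mem_univ, true_and]
    constructor
    · rintro ⟨hkS, hlt⟩
      obtain ⟨j, rfl⟩ : k ∈ Set.range e := by rwa [S.range_orderEmbOfFin]
      exact ⟨j, e.lt_iff_lt.1 hlt, rfl⟩
    · rintro ⟨j, hj, rfl⟩
      exact ⟨S.orderEmbOfFin_mem rfl j, e.lt_iff_lt.2 hj⟩
  rw [List.sum_take_ofFn, hpred, sum_map]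
  rfl

section Eluder

variable {α : Type*} (F : Set (α → ℝ)) (β : ℝ) (L : List α)

lemma eluderSeq_ofFn_orderEmbOfFin {S : Finset (Fin L.length)}
    (hS : IsIndepSeq (fun S k => EpsDependentIdx F β L S (L.get k)) S) :
    EluderSeq F β (List.ofFn (L.get ∘ S.orderEmbOfFin rfl)) := by
  refine ⟨β, le_rfl, fun i hdep => ?_⟩
  have hi : i.1 < S.card := by simpa using i.2
  apply hS _ (S.orderEmbOfFin_mem rfl ⟨i, hi⟩)
  intro f hf f' hf' hsum
  have hget : (List.ofFn (L.get ∘ S.orderEmbOfFin rfl)).get i =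
      L.get (S.orderEmbOfFin rfl ⟨i, hi⟩) := by
    simp
  rw [← hget]
  refine hdep f hf f' hf' ?_
  rw [List.map_take, List.map_ofFn]
  convert hsum using 2
  exact S.sum_take_ofFn_orderEmbOfFin (fun k => (f (L.get k) - f' (L.get k)) ^ 2) hi

lemma card_le_of_isIndepSeq {d : ℕ} (hdim : ∀ L : List α, EluderSeq F β L → L.length ≤ d)
    {S : Finset (Fin L.length)}
    (hS : IsIndepSeq (fun S k => EpsDependentIdx F β L S (L.get k)) S) : S.card ≤ d := by
  simpa using hdim _ (eluderSeq_ofFn_orderEmbOfFin F β L hS)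

end Eluder

lemma div_sub_one_le_pred_div (n : ℕ) {d : ℕ} (hd : 0 < d) :
    (n : ℝ) / d - 1 ≤ ((n - 1) / d : ℕ) := by
  have hd' : (0 : ℝ) < d := by exact_mod_cast hd
  have hn : (n : ℝ) ≤ ((n - 1) / d : ℕ) * d + d := by
    have := Nat.lt_div_mul_add (a := n - 1) hd
    exact_mod_cast (by omega : n ≤ (n - 1) / d * d + d)
  rw [div_sub_one hd'.ne', div_le_iff₀ hd']
  linarith

/-- In any sequence `L` of length `τ ≥ d`, where `d` bounds the `β`-eluder
dimension of `F`, some element `L.get j` is `β`-dependent on at least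
`τ/d − 1` pairwise disjoint subsequences of its predecessors. -/
theorem exists_heavily_dependent_element {α : Type*} (F : Set (α → ℝ)) (β : ℝ)
    (d : ℕ) (hd : 0 < d)
    (hdim : ∀ L : List α, EluderSeq F β L → L.length ≤ d)
    (L : List α) (hL : d ≤ L.length) :
    ∃ j : Fin L.length, ∃ m : ℕ, (L.length : ℝ) / d - 1 ≤ (m : ℝ) ∧
      ∃ S : Fin m → Finset (Fin L.length),
        (∀ i, ∀ k ∈ S i, (k : ℕ) < (j : ℕ)) ∧
        (∀ i i', i ≠ i' → Disjoint (S i) (S i')) ∧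
        ∀ i, EpsDependentIdx F β L (S i) (L.get j) := by
  rcases exists_dependent_or_isIndepPartitionBelow
      (fun S k => EpsDependentIdx F β L S (L.get k)) ((L.length - 1) / d) with
    ⟨j, B, hlt, hdisj, hdep⟩ | ⟨B, hB⟩
  · exact ⟨j, _, div_sub_one_le_pred_div L.length hd, B, hlt, fun _ _ h => hdisj h, hdep⟩
  · have hlen := hB.le_mul fun i => card_le_of_isIndepSeq F β L hdim (hB.indep i)
    have := Nat.div_mul_le_self (L.length - 1) d
    omega
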